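/- Let U and W be complex vector spaces with direct sum decompositions U = U¹ ⊕ U⁰ and W = W¹ ⊕ W⁰, where U¹ and U⁰ are both nonzero. Let M := U¹ ⊗ W⁰ + U⁰ ⊗ W¹ ⊆ U ⊗ W, and let e₁,…,e_g be a basis of U¹ and f₁,…,f_g a basis of U⁰ (g ≥ 1). Set δ := Σᵢ (eᵢ ⊗ fᵢ − fᵢ ⊗ eᵢ) ∈ U ⊗ U. If Γ ∈ W satisfies δ ⊗ Γ ∈ U ⊗ M (inside U ⊗ U ⊗ W), then Γ = 0. -/

import Mathlib

open TensorProduct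

-- contraction of the first tensor factor by a functional
noncomputable def stmt17_contr (U W : Type) [AddCommGroup U] [Module ℂ U]
    [AddCommGroup W] [Module ℂ W] (ψ : U →ₗ[ℂ] ℂ) : U ⊗[ℂ] W →ₗ[ℂ] W :=
  (TensorProduct.lid ℂ W).toLinearMap ∘ₗ LinearMap.rTensor W ψ

@[simp] lemma stmt17_contr_tmul (U W : Type) [AddCommGroup U] [Module ℂ U]
    [AddCommGroup W] [Module ℂ W] (ψ : U →ₗ[ℂ] ℂ) (u : U) (w : W) :
    stmt17_contr U W ψ (u ⊗ₜ[ℂ] w) = ψ u • w := rfl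

open TensorProduct in
theorem stmt_17 (U W : Type) [AddCommGroup U] [Module ℂ U] [AddCommGroup W] [Module ℂ W]
    (U1 U0 : Submodule ℂ U) (hU : IsCompl U1 U0) (hU1 : U1 ≠ ⊥) (hU0 : U0 ≠ ⊥)
    (W1 W0 : Submodule ℂ W) (hW : IsCompl W1 W0)
    (g : ℕ) (hg : 1 ≤ g) (e : Module.Basis (Fin g) ℂ U1) (f : Module.Basis (Fin g) ℂ U0)
    (M : Submodule ℂ (U ⊗[ℂ] W))
    (hM : M = LinearMap.range (TensorProduct.map U1.subtype W0.subtype)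
        ⊔ LinearMap.range (TensorProduct.map U0.subtype W1.subtype))
    (Γ : W)
    (h : (TensorProduct.assoc ℂ U U W)
          ((∑ i : Fin g, (((e i : U) ⊗ₜ[ℂ] (f i : U)) - ((f i : U) ⊗ₜ[ℂ] (e i : U)))) ⊗ₜ[ℂ] Γ)
        ∈ LinearMap.range (TensorProduct.map (LinearMap.id : U →ₗ[ℂ] U) M.subtype)) :
    Γ = 0 := by
  classical
  set i0 : Fin g := ⟨0, hg⟩ with hi0
  let πU : U →ₗ[ℂ] U1 := U1.projectionOnto U0 hU
  let πU' : U →ₗ[ℂ] U0 := U0.projectionOnto U1 hU.symm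
  -- Step 1: contracting δ ⊗ Γ with φ in the first slot lands in M
  have step1 : ∀ φ : U →ₗ[ℂ] ℂ,
      (∑ i : Fin g, (φ (e i) • ((f i : U) ⊗ₜ[ℂ] Γ) - φ (f i) • ((e i : U) ⊗ₜ[ℂ] Γ))) ∈ M := by
    intro φ
    obtain ⟨t, ht⟩ := h
    let F := stmt17_contr U (U ⊗[ℂ] W) φ
    have hF : ∀ t : U ⊗[ℂ] M, F ((TensorProduct.map LinearMap.id M.subtype) t) ∈ M := by
      intro t
      induction t using TensorProduct.induction_on with
      | zero => simp [F]
      | tmul u m =>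
          simpa [F] using M.smul_mem (φ u) m.2
      | add x y hx hy => rw [map_add, map_add]; exact M.add_mem hx hy
    have key := hF t
    rw [ht] at key
    have : F ((TensorProduct.assoc ℂ U U W)
        ((∑ i : Fin g, (((e i : U) ⊗ₜ[ℂ] (f i : U)) - ((f i : U) ⊗ₜ[ℂ] (e i : U)))) ⊗ₜ[ℂ] Γ))
        = ∑ i : Fin g, (φ (e i) • ((f i : U) ⊗ₜ[ℂ] Γ) - φ (f i) • ((e i : U) ⊗ₜ[ℂ] Γ)) := by
      rw [TensorProduct.sum_tmul]
      simp [TensorProduct.sub_tmul, TensorProduct.assoc_tmul, F]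
    rwa [this] at key
  -- Step 2: any element of M contracted with a functional vanishing on U1 lands in W1
  have step2 : ∀ (ψ : U →ₗ[ℂ] ℂ), (∀ u ∈ U1, ψ u = 0) → ∀ x ∈ M,
      stmt17_contr U W ψ x ∈ W1 := by
    intro ψ hψ x hx
    rw [hM] at hx
    have hA : ∀ s : (U1 : Submodule ℂ U) ⊗[ℂ] (W0 : Submodule ℂ W),
        stmt17_contr U W ψ ((TensorProduct.map U1.subtype W0.subtype) s) ∈ W1 := by
      intro s
      induction s using TensorProduct.induction_on with
      | zero => simp
      | tmul u w => simp [hψ u u.2]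
      | add x y hx' hy' => rw [map_add, map_add]; exact W1.add_mem hx' hy'
    have hB : ∀ r : (U0 : Submodule ℂ U) ⊗[ℂ] (W1 : Submodule ℂ W),
        stmt17_contr U W ψ ((TensorProduct.map U0.subtype W1.subtype) r) ∈ W1 := by
      intro r
      induction r using TensorProduct.induction_on with
      | zero => simp
      | tmul u w => simpa using W1.smul_mem (ψ u) w.2
      | add x y hx' hy' => rw [map_add, map_add]; exact W1.add_mem hx' hy'
    obtain ⟨a, ha, b, hb, rfl⟩ := Submodule.mem_sup.mp hx
    obtain ⟨s, rfl⟩ := ha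
    obtain ⟨r, rfl⟩ := hb
    rw [map_add]
    exact W1.add_mem (hA s) (hB r)
  have step2' : ∀ (ψ : U →ₗ[ℂ] ℂ), (∀ u ∈ U0, ψ u = 0) → ∀ x ∈ M,
      stmt17_contr U W ψ x ∈ W0 := by
    intro ψ hψ x hx
    rw [hM] at hx
    have hA : ∀ s : (U1 : Submodule ℂ U) ⊗[ℂ] (W0 : Submodule ℂ W),
        stmt17_contr U W ψ ((TensorProduct.map U1.subtype W0.subtype) s) ∈ W0 := by
      intro s
      induction s using TensorProduct.induction_on with
      | zero => simp
      | tmul u w => simpa using W0.smul_mem (ψ u) w.2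
      | add x y hx' hy' => rw [map_add, map_add]; exact W0.add_mem hx' hy'
    have hB : ∀ r : (U0 : Submodule ℂ U) ⊗[ℂ] (W1 : Submodule ℂ W),
        stmt17_contr U W ψ ((TensorProduct.map U0.subtype W1.subtype) r) ∈ W0 := by
      intro r
      induction r using TensorProduct.induction_on with
      | zero => simp
      | tmul u w => simp [hψ u u.2]
      | add x y hx' hy' => rw [map_add, map_add]; exact W0.add_mem hx' hy'
    obtain ⟨a, ha, b, hb, rfl⟩ := Submodule.mem_sup.mp hx
    obtain ⟨s, rfl⟩ := ha
    obtain ⟨r, rfl⟩ := hb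
    rw [map_add]
    exact W0.add_mem (hA s) (hB r)
  -- getting f i0 ⊗ Γ ∈ M
  have hfΓ : ((f i0 : U) ⊗ₜ[ℂ] Γ) ∈ M := by
    have := step1 ((e.coord i0) ∘ₗ πU)
    have heval : ∀ i : Fin g,
        ((e.coord i0) ∘ₗ πU) (e i) = (if i = i0 then (1:ℂ) else 0) ∧
        ((e.coord i0) ∘ₗ πU) (f i) = 0 := by
      intro i
      constructor
      · simp [πU, Submodule.linearProjOfIsCompl_apply_left hU (e i),
          Module.Basis.coord_apply, Module.Basis.repr_self, Finsupp.single_apply]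
      · simp [πU, Submodule.linearProjOfIsCompl_apply_right hU (f i)]
    have hsum : (∑ i : Fin g, (((e.coord i0) ∘ₗ πU) (e i) • ((f i : U) ⊗ₜ[ℂ] Γ)
        - ((e.coord i0) ∘ₗ πU) (f i) • ((e i : U) ⊗ₜ[ℂ] Γ)))
        = ((f i0 : U) ⊗ₜ[ℂ] Γ) := by
      rw [Finset.sum_congr rfl (fun i _ => by rw [(heval i).1, (heval i).2])]
      simp
    rwa [hsum] at this
  have heΓ : ((e i0 : U) ⊗ₜ[ℂ] Γ) ∈ M := by
    have := step1 ((f.coord i0) ∘ₗ πU')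
    have heval : ∀ i : Fin g,
        ((f.coord i0) ∘ₗ πU') (f i) = (if i = i0 then (1:ℂ) else 0) ∧
        ((f.coord i0) ∘ₗ πU') (e i) = 0 := by
      intro i
      constructor
      · simp [πU', Submodule.linearProjOfIsCompl_apply_left hU.symm (f i),
          Module.Basis.coord_apply, Module.Basis.repr_self, Finsupp.single_apply]
      · simp [πU', Submodule.linearProjOfIsCompl_apply_right hU.symm (e i)]
    have hsum : (∑ i : Fin g, (((f.coord i0) ∘ₗ πU') (e i) • ((f i : U) ⊗ₜ[ℂ] Γ)
        - ((f.coord i0) ∘ₗ πU') (f i) • ((e i : U) ⊗ₜ[ℂ] Γ)))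
        = -((e i0 : U) ⊗ₜ[ℂ] Γ) := by
      rw [Finset.sum_congr rfl (fun i _ => by rw [(heval i).1, (heval i).2])]
      simp
    rw [hsum] at this
    simpa using M.neg_mem this
  -- Γ ∈ W1
  have hΓ1 : Γ ∈ W1 := by
    have h0 : ∀ u ∈ U1, ((f.coord i0) ∘ₗ πU') u = 0 := by
      intro u hu
      simp [πU', Submodule.linearProjOfIsCompl_apply_right hU.symm ⟨u, hu⟩]
    have := step2 _ h0 _ hfΓ
    have hone : ((f.coord i0) ∘ₗ πU') (f i0) = 1 := by
      simp [πU', Submodule.linearProjOfIsCompl_apply_left hU.symm (f i0),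
        Module.Basis.coord_apply, Module.Basis.repr_self]
    simpa [stmt17_contr_tmul, hone] using this
  have hΓ0 : Γ ∈ W0 := by
    have h0 : ∀ u ∈ U0, ((e.coord i0) ∘ₗ πU) u = 0 := by
      intro u hu
      simp [πU, Submodule.linearProjOfIsCompl_apply_right hU ⟨u, hu⟩]
    have := step2' _ h0 _ heΓ
    have hone : ((e.coord i0) ∘ₗ πU) (e i0) = 1 := by
      simp [πU, Submodule.linearProjOfIsCompl_apply_left hU (e i0),
        Module.Basis.coord_apply, Module.Basis.repr_self]
    simpa [stmt17_contr_tmul, hone] using this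
  have : Γ ∈ W1 ⊓ W0 := ⟨hΓ1, hΓ0⟩
  rw [hW.inf_eq_bot] at this
  simpa using this
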